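/- arXiv:0807.2028 — 2 statements merged into one kernel-verified Lean document; each statement's English description precedes it below -/
import Mathlib

section
/- Consider n agents with opinions x_1(t),…,x_n(t) ∈ ℝ and positive weights w_1,…,w_n evolving according to the weighted Krause model. Then the opinions converge in finite time: there exist x_1*,…,x_n* ∈ ℝ and a time T such that x_i(t) = x_i* for all i and all t ≥ T; moreover for any pair i, j, either x_i* = x_j* or |x_i* − x_j*| ≥ 1. In addition, the order of opinions is preserved: if x_i(0) ≤ x_j(0) then x_i(t) ≤ x_j(t) for all t. -/
open Finset Filter Topology

set_option linter.unusedSectionVars false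

section Aux
variable {ι : Type*} [DecidableEq ι]

lemma cross_sum (P Q : Finset ι) (w f : ι → ℝ)
    (hwP : ∀ p ∈ P, 0 ≤ w p) (hwQ : ∀ q ∈ Q, 0 ≤ w q)
    (h : ∀ p ∈ P, ∀ q ∈ Q, f p ≤ f q) :
    (∑ p ∈ P, w p * f p) * (∑ q ∈ Q, w q) ≤ (∑ q ∈ Q, w q * f q) * (∑ p ∈ P, w p) := by
  have hr : (∑ q ∈ Q, w q * f q) * (∑ p ∈ P, w p) = ∑ p ∈ P, ∑ q ∈ Q, (w q * f q) * w p := by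
    rw [Finset.sum_mul_sum]
    exact Finset.sum_comm
  rw [Finset.sum_mul_sum, hr]
  refine Finset.sum_le_sum fun p hp => Finset.sum_le_sum fun q hq => ?_
  have h1 := h p hp q hq
  have h2 := hwP p hp
  have h3 := hwQ q hq
  nlinarith [mul_le_mul_of_nonneg_left h1 (mul_nonneg h2 h3)]

lemma wavg_le (S : Finset ι) (w f : ι → ℝ) (hS : S.Nonempty) (hw : ∀ j ∈ S, 0 < w j)
    {M : ℝ} (hM : ∀ j ∈ S, f j ≤ M) :
    (∑ j ∈ S, w j * f j) / (∑ j ∈ S, w j) ≤ M := by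
  have hpos : 0 < ∑ j ∈ S, w j := Finset.sum_pos hw hS
  rw [div_le_iff₀ hpos]
  calc ∑ j ∈ S, w j * f j ≤ ∑ j ∈ S, w j * M :=
        Finset.sum_le_sum fun j hj => mul_le_mul_of_nonneg_left (hM j hj) (hw j hj).le
    _ = M * ∑ j ∈ S, w j := by rw [← Finset.sum_mul, mul_comm]

lemma le_wavg (S : Finset ι) (w f : ι → ℝ) (hS : S.Nonempty) (hw : ∀ j ∈ S, 0 < w j)
    {m : ℝ} (hm : ∀ j ∈ S, m ≤ f j) :
    m ≤ (∑ j ∈ S, w j * f j) / (∑ j ∈ S, w j) := by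
  have hpos : 0 < ∑ j ∈ S, w j := Finset.sum_pos hw hS
  rw [le_div_iff₀ hpos]
  calc m * ∑ j ∈ S, w j = ∑ j ∈ S, w j * m := by rw [← Finset.sum_mul, mul_comm]
    _ ≤ ∑ j ∈ S, w j * f j :=
        Finset.sum_le_sum fun j hj => mul_le_mul_of_nonneg_left (hm j hj) (hw j hj).le

lemma wavg_const (S : Finset ι) (w : ι → ℝ) (hS : S.Nonempty) (hw : ∀ j ∈ S, 0 < w j)
    (c : ℝ) : (∑ j ∈ S, w j * c) / (∑ j ∈ S, w j) = c := by
  have hpos : 0 < ∑ j ∈ S, w j := Finset.sum_pos hw hS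
  rw [← Finset.sum_mul, mul_comm, mul_div_assoc, div_self hpos.ne', mul_one]

lemma wavg_boost (S : Finset ι) (w f : ι → ℝ) (hw : ∀ j ∈ S, 0 < w j)
    {i : ι} (hi : i ∈ S) {m W : ℝ} (hm : ∀ j ∈ S, m ≤ f j)
    (hW : (∑ j ∈ S, w j) ≤ W) :
    m + (w i / W) * (f i - m) ≤ (∑ j ∈ S, w j * f j) / (∑ j ∈ S, w j) := by
  have hpos : 0 < ∑ j ∈ S, w j := Finset.sum_pos hw ⟨i, hi⟩
  have hWpos : 0 < W := lt_of_lt_of_le hpos hW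
  have hc : 0 ≤ w i * (f i - m) := mul_nonneg (hw i hi).le (sub_nonneg.2 (hm i hi))
  have key : w i * (f i - m) ≤ ∑ j ∈ S, w j * (f j - m) :=
    Finset.single_le_sum (f := fun j => w j * (f j - m))
      (fun j hj => mul_nonneg (hw j hj).le (sub_nonneg.2 (hm j hj))) hi
  have hsum : ∑ j ∈ S, w j * (f j - m) = (∑ j ∈ S, w j * f j) - m * (∑ j ∈ S, w j) := by
    rw [Finset.mul_sum, ← Finset.sum_sub_distrib]
    exact Finset.sum_congr rfl fun j _ => by ring
  have key' : m * (∑ j ∈ S, w j) + w i * (f i - m) ≤ ∑ j ∈ S, w j * f j := by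
    rw [hsum] at key; linarith
  rw [le_div_iff₀ hpos]
  have h2 : (w i / W) * (f i - m) * (∑ j ∈ S, w j) ≤ w i * (f i - m) := by
    have he : (w i / W) * (f i - m) * (∑ j ∈ S, w j) = w i * (f i - m) * ((∑ j ∈ S, w j) / W) := by
      ring
    rw [he]
    exact mul_le_of_le_one_right hc ((div_le_one hWpos).2 hW)
  nlinarith [key', h2]

lemma wavg_mono (A B : Finset ι) (w f : ι → ℝ)
    (hwA : ∀ j ∈ A, 0 < w j) (hwB : ∀ j ∈ B, 0 < w j)
    (hA : A.Nonempty) (hB : B.Nonempty)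
    (H1 : ∀ p ∈ A, p ∉ B → ∀ q ∈ B, f p ≤ f q)
    (H2 : ∀ p ∈ A, ∀ q ∈ B, q ∉ A → f p ≤ f q) :
    (∑ j ∈ A, w j * f j) / (∑ j ∈ A, w j) ≤ (∑ j ∈ B, w j * f j) / (∑ j ∈ B, w j) := by
  have hApos : 0 < ∑ j ∈ A, w j := Finset.sum_pos hwA hA
  have hBpos : 0 < ∑ j ∈ B, w j := Finset.sum_pos hwB hB
  rw [div_le_div_iff₀ hApos hBpos]
  have eA : ∀ g : ι → ℝ, ∑ j ∈ A, g j = ∑ j ∈ A ∩ B, g j + ∑ j ∈ A \ B, g j :=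
    fun g => (Finset.sum_inter_add_sum_sdiff A B g).symm
  have eB : ∀ g : ι → ℝ, ∑ j ∈ B, g j = ∑ j ∈ A ∩ B, g j + ∑ j ∈ B \ A, g j := by
    intro g
    rw [Finset.inter_comm]
    exact (Finset.sum_inter_add_sum_sdiff B A g).symm
  rw [eA (fun j => w j * f j), eA w, eB (fun j => w j * f j), eB w]
  have h1 : (∑ p ∈ A \ B, w p * f p) * (∑ q ∈ B \ A, w q)
      ≤ (∑ q ∈ B \ A, w q * f q) * (∑ p ∈ A \ B, w p) := by
    refine cross_sum _ _ _ _ (fun p hp => (hwA p (Finset.mem_sdiff.1 hp).1).le)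
      (fun q hq => (hwB q (Finset.mem_sdiff.1 hq).1).le) (fun p hp q hq => ?_)
    obtain ⟨hpA, hpB⟩ := Finset.mem_sdiff.1 hp
    obtain ⟨hqB, _⟩ := Finset.mem_sdiff.1 hq
    exact H1 p hpA hpB q hqB
  have h2 : (∑ p ∈ A \ B, w p * f p) * (∑ q ∈ A ∩ B, w q)
      ≤ (∑ q ∈ A ∩ B, w q * f q) * (∑ p ∈ A \ B, w p) := by
    refine cross_sum _ _ _ _ (fun p hp => (hwA p (Finset.mem_sdiff.1 hp).1).le)
      (fun q hq => (hwA q (Finset.mem_inter.1 hq).1).le) (fun p hp q hq => ?_)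
    obtain ⟨hpA, hpB⟩ := Finset.mem_sdiff.1 hp
    exact H1 p hpA hpB q (Finset.mem_inter.1 hq).2
  have h3 : (∑ p ∈ A ∩ B, w p * f p) * (∑ q ∈ B \ A, w q)
      ≤ (∑ q ∈ B \ A, w q * f q) * (∑ p ∈ A ∩ B, w p) := by
    refine cross_sum _ _ _ _ (fun p hp => (hwA p (Finset.mem_inter.1 hp).1).le)
      (fun q hq => (hwB q (Finset.mem_sdiff.1 hq).1).le) (fun p hp q hq => ?_)
    obtain ⟨hqB, hqA⟩ := Finset.mem_sdiff.1 hq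
    exact H2 p (Finset.mem_inter.1 hp).1 q hqB hqA
  nlinarith [h1, h2, h3]

lemma finset_stabilize {α : Type*} [Fintype α] (P : ℕ → α → Prop)
    (hmono : ∀ t a, P t a → P (t + 1) a) :
    ∃ T, ∀ t ≥ T, ∀ a, P t a ↔ P T a := by
  classical
  set g : ℕ → Finset α := fun t => Finset.univ.filter (fun a => P t a) with hg
  have gmono : ∀ s t, s ≤ t → g s ⊆ g t := by
    intro s t hst
    induction t, hst using Nat.le_induction with
    | base => exact subset_rfl
    | succ t ht ih =>
      refine ih.trans fun a ha => ?_
      simp only [hg, Finset.mem_filter] at ha ⊢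
      exact ⟨ha.1, hmono t a ha.2⟩
  have hbdd : BddAbove (Set.range fun t => (g t).card) := by
    refine ⟨Fintype.card α, ?_⟩
    rintro _ ⟨t, rfl⟩
    exact Finset.card_le_univ _
  obtain ⟨T, hT⟩ : ∃ T, (g T).card = sSup (Set.range fun t => (g t).card) := by
    have := Nat.sSup_mem (s := Set.range fun t => (g t).card) ⟨(g 0).card, ⟨0, rfl⟩⟩ hbdd
    obtain ⟨T, hT⟩ := this
    exact ⟨T, hT⟩
  refine ⟨T, fun t ht a => ?_⟩
  have hsub : g T ⊆ g t := gmono T t ht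
  have hcard : (g t).card ≤ (g T).card := by
    rw [hT]; exact le_csSup hbdd ⟨t, rfl⟩
  have : g T = g t := Finset.eq_of_subset_of_card_le hsub hcard
  constructor
  · intro h
    have : a ∈ g T := by rw [this]; simp only [hg, Finset.mem_filter]; exact ⟨Finset.mem_univ a, h⟩
    simpa [hg] using this
  · intro h
    have : a ∈ g t := by
      rw [← this]; simp only [hg, Finset.mem_filter]; exact ⟨Finset.mem_univ a, h⟩
    simpa [hg] using this

end Aux

section Krause
variable {n : ℕ} (w : Fin n → ℝ) (x : ℕ → Fin n → ℝ)

/-- neighborhood -/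
noncomputable def Nbr (t : ℕ) (i : Fin n) : Finset (Fin n) :=
  Finset.univ.filter (fun j => |x t i - x t j| < 1)

lemma mem_Nbr {t : ℕ} {i j : Fin n} : j ∈ Nbr x t i ↔ |x t i - x t j| < 1 := by
  simp [Nbr]

lemma self_mem_Nbr (t : ℕ) (i : Fin n) : i ∈ Nbr x t i := by
  simp [Nbr]

variable (hw : ∀ i, 0 < w i)
variable (hupd : ∀ t (i : Fin n), x (t + 1) i =
      (∑ j ∈ Finset.univ.filter (fun j => |x t i - x t j| < 1), w j * x t j) /
      (∑ j ∈ Finset.univ.filter (fun j => |x t i - x t j| < 1), w j))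

include hw hupd

lemma upd (t : ℕ) (i : Fin n) :
    x (t + 1) i = (∑ j ∈ Nbr x t i, w j * x t j) / (∑ j ∈ Nbr x t i, w j) :=
  hupd t i

lemma upd_le {t : ℕ} {i : Fin n} {M : ℝ} (hM : ∀ j ∈ Nbr x t i, x t j ≤ M) :
    x (t + 1) i ≤ M := by
  rw [upd w x hw hupd]
  exact wavg_le _ _ _ ⟨i, self_mem_Nbr x t i⟩ (fun j _ => hw j) hM

lemma le_upd {t : ℕ} {i : Fin n} {m : ℝ} (hm : ∀ j ∈ Nbr x t i, m ≤ x t j) :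
    m ≤ x (t + 1) i := by
  rw [upd w x hw hupd]
  exact le_wavg _ _ _ ⟨i, self_mem_Nbr x t i⟩ (fun j _ => hw j) hm

/-- one-step order preservation -/
lemma mono_step {t : ℕ} {i j : Fin n} (h : x t i ≤ x t j) :
    x (t + 1) i ≤ x (t + 1) j := by
  rw [upd w x hw hupd, upd w x hw hupd]
  refine wavg_mono (Nbr x t i) (Nbr x t j) w (x t) (fun k _ => hw k) (fun k _ => hw k)
    ⟨i, self_mem_Nbr x t i⟩ ⟨j, self_mem_Nbr x t j⟩ ?_ ?_
  · intro p hp hpB q hq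
    rw [mem_Nbr] at hp hq
    rw [mem_Nbr] at hpB
    push_neg at hpB
    have h1 : x t p < x t i + 1 := by cases abs_lt.1 hp; linarith
    have h2 : x t q > x t j - 1 := by cases abs_lt.1 hq; linarith
    rcases le_abs.1 hpB with h3 | h3
    · linarith
    · linarith
  · intro p hp q hq hqA
    rw [mem_Nbr] at hp hq
    rw [mem_Nbr] at hqA
    push_neg at hqA
    have h1 : x t p < x t i + 1 := by cases abs_lt.1 hp; linarith
    have h2 : x t q > x t j - 1 := by cases abs_lt.1 hq; linarith
    rcases le_abs.1 hqA with h3 | h3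
    · linarith
    · linarith

/-- order preservation from any time -/
lemma mono_from {s t : ℕ} (hst : s ≤ t) {i j : Fin n} (h : x s i ≤ x s j) :
    x t i ≤ x t j := by
  induction t, hst using Nat.le_induction with
  | base => exact h
  | succ t ht ih => exact mono_step w x hw hupd ih

lemma eq_from {s t : ℕ} (hst : s ≤ t) {i j : Fin n} (h : x s i = x s j) :
    x t i = x t j :=
  le_antisymm (mono_from w x hw hupd hst h.le) (mono_from w x hw hupd hst h.ge)

/-- cuts -/
def IsCut (t : ℕ) (c : ℝ) : Prop := ∀ k, x t k ≤ c ∨ c + 1 ≤ x t k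

lemma cut_step_left {t : ℕ} {c : ℝ} (hc : IsCut x t c) {k : Fin n} (hk : x t k ≤ c) :
    x (t + 1) k ≤ c := by
  refine upd_le w x hw hupd (fun j hj => ?_)
  rcases hc j with h | h
  · exact h
  · exfalso
    rw [mem_Nbr] at hj
    have := abs_lt.1 hj
    linarith [this.1]

lemma cut_step_right {t : ℕ} {c : ℝ} (hc : IsCut x t c) {k : Fin n} (hk : c + 1 ≤ x t k) :
    c + 1 ≤ x (t + 1) k := by
  refine le_upd w x hw hupd (fun j hj => ?_)
  rcases hc j with h | h
  · exfalso
    rw [mem_Nbr] at hj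
    have := abs_lt.1 hj
    linarith [this.2]
  · exact h

lemma cut_step {t : ℕ} {c : ℝ} (hc : IsCut x t c) : IsCut x (t + 1) c := by
  intro k
  rcases hc k with h | h
  · exact Or.inl (cut_step_left w x hw hupd hc h)
  · exact Or.inr (cut_step_right w x hw hupd hc h)

/-- separation -/
def Sepa (t : ℕ) (i j : Fin n) : Prop :=
  ∃ c, IsCut x t c ∧ ((x t i ≤ c ∧ c + 1 ≤ x t j) ∨ (x t j ≤ c ∧ c + 1 ≤ x t i))

lemma sepa_symm {t : ℕ} {i j : Fin n} (h : Sepa x t i j) : Sepa x t j i := by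
  obtain ⟨c, hc, h⟩ := h
  exact ⟨c, hc, h.symm⟩

lemma sepa_irrefl (t : ℕ) (i : Fin n) : ¬ Sepa x t i i := by
  rintro ⟨c, _, h | h⟩ <;> linarith [h.1, h.2]

lemma sepa_one_le {t : ℕ} {i j : Fin n} (h : Sepa x t i j) : 1 ≤ |x t i - x t j| := by
  obtain ⟨c, _, h | h⟩ := h
  · rw [abs_sub_comm]; rw [le_abs]; left; linarith [h.1, h.2]
  · rw [le_abs]; left; linarith [h.1, h.2]

lemma sepa_step {t : ℕ} {i j : Fin n} (h : Sepa x t i j) : Sepa x (t + 1) i j := by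
  obtain ⟨c, hc, h | h⟩ := h
  · exact ⟨c, cut_step w x hw hupd hc,
      Or.inl ⟨cut_step_left w x hw hupd hc h.1, cut_step_right w x hw hupd hc h.2⟩⟩
  · exact ⟨c, cut_step w x hw hupd hc,
      Or.inr ⟨cut_step_left w x hw hupd hc h.1, cut_step_right w x hw hupd hc h.2⟩⟩

lemma sepa_mono {s t : ℕ} (hst : s ≤ t) {i j : Fin n} (h : Sepa x s i j) : Sepa x t i j := by
  induction t, hst using Nat.le_induction with
  | base => exact h
  | succ t ht ih => exact sepa_step w x hw hupd ih

lemma not_sepa_trans {t : ℕ} {i j k : Fin n} (hij : ¬ Sepa x t i j) (hjk : ¬ Sepa x t j k) :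
    ¬ Sepa x t i k := by
  rintro ⟨c, hc, h⟩
  rcases hc j with hj | hj
  · rcases h with h | h
    · exact hjk ⟨c, hc, Or.inl ⟨hj, h.2⟩⟩
    · exact hij ⟨c, hc, Or.inr ⟨hj, h.2⟩⟩
  · rcases h with h | h
    · exact hij ⟨c, hc, Or.inl ⟨h.1, hj⟩⟩
    · exact hjk ⟨c, hc, Or.inr ⟨h.1, hj⟩⟩

lemma nbr_not_sep {t : ℕ} {i j : Fin n} (h : j ∈ Nbr x t i) : ¬ Sepa x t i j := by
  intro hs
  rw [mem_Nbr] at h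
  linarith [sepa_one_le w x hw hupd hs]

lemma global_ub (hn : (Finset.univ : Finset (Fin n)).Nonempty) :
    ∀ t k, x t k ≤ Finset.univ.sup' hn (x 0) := by
  intro t
  induction t with
  | zero => exact fun k => Finset.le_sup' (x 0) (Finset.mem_univ k)
  | succ t ih =>
    intro k
    exact upd_le w x hw hupd (fun j _ => ih j)

lemma class_convergence (T1 : ℕ)
    (hstab : ∀ t ≥ T1, ∀ i j, Sepa x t i j ↔ Sepa x T1 i j)
    (i0 : Fin n) (C : Finset (Fin n)) (hC : ∀ j, j ∈ C ↔ ¬ Sepa x T1 i0 j)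
    (B0 : ℝ) (hB0 : ∀ t k, x t k ≤ B0) :
    ∃ ℓ, ∀ j ∈ C, Tendsto (fun t => x t j) atTop (𝓝 ℓ) := by
  classical
  have hi0C : i0 ∈ C := (hC i0).2 (sepa_irrefl w x hw hupd T1 i0)
  have hne : C.Nonempty := ⟨i0, hi0C⟩
  -- classes are closed under neighborhoods
  have hclosed : ∀ t, T1 ≤ t → ∀ j ∈ C, ∀ k ∈ Nbr x t j, k ∈ C := by
    intro t ht j hj k hk
    have h1 : ¬ Sepa x t j k := nbr_not_sep w x hw hupd hk
    have h2 : ¬ Sepa x T1 j k := fun h => h1 ((hstab t ht j k).2 h)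
    exact (hC k).2 (not_sepa_trans w x hw hupd ((hC j).1 hj) h2)
  set mC : ℕ → ℝ := fun t => C.inf' hne (x t) with hmC
  have hmC_le : ∀ t, ∀ j ∈ C, mC t ≤ x t j := fun t j hj => Finset.inf'_le (x t) hj
  have hmC_mono : ∀ t, T1 ≤ t → mC t ≤ mC (t + 1) := by
    intro t ht
    refine Finset.le_inf' hne _ (fun j hj => ?_)
    exact le_upd w x hw hupd (fun k hk => hmC_le t k (hclosed t ht j hj k hk))
  have hgmono : Monotone (fun s => mC (s + T1)) := by
    refine monotone_nat_of_le_succ (fun s => ?_)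
    show mC (s + T1) ≤ mC (s + 1 + T1)
    have he : s + 1 + T1 = s + T1 + 1 := by omega
    rw [he]
    exact hmC_mono (s + T1) (Nat.le_add_left _ _)
  have hgbdd : BddAbove (Set.range (fun s => mC (s + T1))) := by
    refine ⟨B0, ?_⟩
    rintro _ ⟨s, rfl⟩
    exact (hmC_le (s + T1) i0 hi0C).trans (hB0 _ _)
  set ℓ : ℝ := ⨆ s, mC (s + T1) with hℓ
  have htg : Tendsto (fun s => mC (s + T1)) atTop (𝓝 ℓ) := tendsto_atTop_ciSup hgmono hgbdd
  have htm : Tendsto mC atTop (𝓝 ℓ) := (Filter.tendsto_add_atTop_iff_nat T1).1 htg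
  have hnotsep : ∀ a ∈ C, ∀ b ∈ C, ¬ Sepa x T1 a b := by
    intro a ha b hb
    have h1 : ¬ Sepa x T1 a i0 := fun h => ((hC a).1 ha) (sepa_symm w x hw hupd h)
    exact not_sepa_trans w x hw hupd h1 ((hC b).1 hb)
  have key : ∀ r : ℕ, ∀ j ∈ C, (C.filter fun k => x T1 k < x T1 j).card ≤ r →
      Tendsto (fun t => x t j) atTop (𝓝 ℓ) := by
    intro r
    induction r with
    | zero =>
      intro j hj hcard
      have hemp : ∀ k ∈ C, x T1 j ≤ x T1 k := by
        intro k hk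
        by_contra hlt
        push_neg at hlt
        have : k ∈ C.filter fun k => x T1 k < x T1 j := Finset.mem_filter.2 ⟨hk, hlt⟩
        have := Finset.card_pos.2 ⟨k, this⟩
        omega
      have heq : ∀ t, T1 ≤ t → x t j = mC t := by
        intro t ht
        refine le_antisymm ?_ (hmC_le t j hj)
        exact Finset.le_inf' hne _ (fun k hk => mono_from w x hw hupd ht (hemp k hk))
      refine htm.congr' ?_
      filter_upwards [eventually_ge_atTop T1] with t ht using (heq t ht).symm
    | succ r ih =>
      intro j hj hcard
      by_cases hres : (C.filter fun k => x T1 k < x T1 j).card ≤ r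
      · exact ih j hj hres
      push_neg at hres
      set D := C.filter fun k => x T1 k < x T1 j with hD
      have hDne : D.Nonempty := Finset.card_pos.1 (by omega)
      obtain ⟨j0, hj0D, hj0max⟩ := D.exists_max_image (x T1) hDne
      have hj0C : j0 ∈ C := (Finset.mem_filter.1 hj0D).1
      have hj0lt : x T1 j0 < x T1 j := (Finset.mem_filter.1 hj0D).2
      have hsubD : (C.filter fun k => x T1 k < x T1 j0) ⊆ D.erase j0 := by
        intro k hk
        obtain ⟨hkC, hklt⟩ := Finset.mem_filter.1 hk
        refine Finset.mem_erase.2 ⟨?_, Finset.mem_filter.2 ⟨hkC, hklt.trans hj0lt⟩⟩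
        intro hkj
        rw [hkj] at hklt
        exact lt_irrefl _ hklt
      have hcard0 : (C.filter fun k => x T1 k < x T1 j0).card ≤ r := by
        have h1 := Finset.card_le_card hsubD
        rw [Finset.card_erase_of_mem hj0D] at h1
        omega
      have htj0 : Tendsto (fun t => x t j0) atTop (𝓝 ℓ) := ih j0 hj0C hcard0
      -- gap bound: for all t ≥ T1, |x t j0 - x t j| < 1
      have hgap : ∀ t, T1 ≤ t → j ∈ Nbr x t j0 := by
        intro t ht
        have hord : x t j0 ≤ x t j := mono_from w x hw hupd ht hj0lt.le
        rw [mem_Nbr, abs_sub_lt_iff]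
        refine ⟨by linarith, ?_⟩
        by_contra hge
        push_neg at hge
        -- dichotomy for all agents
        have hdich : ∀ k, x t k ≤ x t j0 ∨ x t j ≤ x t k := by
          intro k
          by_cases hkC : k ∈ C
          · rcases lt_or_ge (x T1 k) (x T1 j) with hk | hk
            · exact Or.inl (mono_from w x hw hupd ht
                (hj0max k (Finset.mem_filter.2 ⟨hkC, hk⟩)))
            · exact Or.inr (mono_from w x hw hupd ht hk)
          · have hsjk : Sepa x T1 j k := by
              by_contra hns
              exact hkC ((hC k).2 (not_sepa_trans w x hw hupd ((hC j).1 hj) hns))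
            have hsj0k : Sepa x T1 j0 k := by
              by_contra hns
              exact hkC ((hC k).2 (not_sepa_trans w x hw hupd ((hC j0).1 hj0C) hns))
            have hsjk_t : Sepa x t j k := (hstab t ht j k).2 hsjk
            have hsj0k_t : Sepa x t j0 k := (hstab t ht j0 k).2 hsj0k
            obtain ⟨c', hcut', hcase'⟩ := hsj0k_t
            rcases hcase' with ⟨h1, h2⟩ | ⟨h1, h2⟩
            · -- x t j0 ≤ c', c' + 1 ≤ x t k
              obtain ⟨c'', hcut'', hcase''⟩ := hsjk_t
              rcases hcase'' with ⟨g1, g2⟩ | ⟨g1, g2⟩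
              · exact Or.inr (by linarith)
              · -- x t k ≤ c'', c'' + 1 ≤ x t j : derive Sepa x t j0 j, contradiction
                exfalso
                have hsepj0j : Sepa x t j0 j := ⟨c', hcut', Or.inl ⟨h1, by linarith⟩⟩
                exact hnotsep j0 hj0C j hj ((hstab t ht j0 j).1 hsepj0j)
            · exact Or.inl (by linarith)
        have hcut : IsCut x t (x t j0) := by
          intro k
          rcases hdich k with h | h
          · exact Or.inl h
          · exact Or.inr (by linarith)
        have : Sepa x t j0 j := ⟨x t j0, hcut, Or.inl ⟨le_refl _, by linarith⟩⟩
        exact hnotsep j0 hj0C j hj ((hstab t ht j0 j).1 this)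
      -- the boost inequality
      have hWpos : (0:ℝ) < ∑ k, w k :=
        Finset.sum_pos (fun k _ => hw k) ⟨i0, Finset.mem_univ i0⟩
      set ρ : ℝ := w j / (∑ k, w k) with hρdef
      have hρpos : 0 < ρ := div_pos (hw j) hWpos
      have hineq : ∀ t, T1 ≤ t → x t j ≤ mC t + (x (t + 1) j0 - mC t) / ρ := by
        intro t ht
        have hboost : mC t + ρ * (x t j - mC t) ≤ x (t + 1) j0 := by
          rw [upd w x hw hupd]
          refine wavg_boost _ _ _ (fun k _ => hw k) (hgap t ht) ?_ ?_
          · exact fun k hk => hmC_le t k (hclosed t ht j0 hj0C k hk)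
          · exact Finset.sum_le_sum_of_subset_of_nonneg (Finset.subset_univ _)
              (fun k _ _ => (hw k).le)
        have h2 : ρ * (x t j - mC t) ≤ x (t + 1) j0 - mC t := by linarith
        have h3 : x t j - mC t ≤ (x (t + 1) j0 - mC t) / ρ := by
          rw [le_div_iff₀ hρpos]
          linarith [h2]
        linarith
      -- squeeze
      have htail : Tendsto (fun t => x (t + 1) j0) atTop (𝓝 ℓ) :=
        (Filter.tendsto_add_atTop_iff_nat 1).2 htj0
      have hupper : Tendsto (fun t => mC t + (x (t + 1) j0 - mC t) / ρ) atTop (𝓝 ℓ) := by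
        have := htm.add (((htail.sub htm).div_const ρ))
        simpa using this
      refine tendsto_of_tendsto_of_tendsto_of_le_of_le' htm hupper ?_ ?_
      · exact Filter.Eventually.of_forall (fun t => hmC_le t j hj)
      · filter_upwards [eventually_ge_atTop T1] with t ht using hineq t ht
  exact ⟨ℓ, fun j hj => key _ j hj le_rfl⟩

end Krause

/-- In the weighted Krause model with positive weights, opinions
converge in finite time, any two limiting values are either equal or at
distance at least 1, and the order of opinions is preserved. -/
theorem weighted_krause_convergence_and_order (n : ℕ) (w : Fin n → ℝ)
    (hw : ∀ i, 0 < w i) (x : ℕ → Fin n → ℝ)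
    (hupd : ∀ t (i : Fin n), x (t + 1) i =
      (∑ j ∈ Finset.univ.filter (fun j => |x t i - x t j| < 1), w j * x t j) /
      (∑ j ∈ Finset.univ.filter (fun j => |x t i - x t j| < 1), w j)) :
    (∃ (xstar : Fin n → ℝ) (T : ℕ),
      (∀ i : Fin n, ∀ t ≥ T, x t i = xstar i) ∧
      (∀ i j : Fin n, xstar i = xstar j ∨ 1 ≤ |xstar i - xstar j|)) ∧
    (∀ i j : Fin n, x 0 i ≤ x 0 j → ∀ t : ℕ, x t i ≤ x t j) := by
  classical
  constructor
  · -- convergence in finite time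
    rcases Nat.eq_zero_or_pos n with hn0 | hnpos
    · subst hn0
      exact ⟨fun i => i.elim0, 0, fun i => i.elim0, fun i => i.elim0⟩
    have hne : (Finset.univ : Finset (Fin n)).Nonempty := by
      refine ⟨⟨0, hnpos⟩, Finset.mem_univ _⟩
    -- stabilization of the separation relation
    obtain ⟨T1, hstab'⟩ := finset_stabilize (fun t (p : Fin n × Fin n) => Sepa x t p.1 p.2)
      (fun t p h => sepa_step w x hw hupd h)
    have hstab : ∀ t ≥ T1, ∀ i j, Sepa x t i j ↔ Sepa x T1 i j :=
      fun t ht i j => hstab' t ht (i, j)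
    -- classes
    set C : Fin n → Finset (Fin n) :=
      fun i => Finset.univ.filter (fun j => ¬ Sepa x T1 i j) with hCdef
    have hCmem : ∀ i j, j ∈ C i ↔ ¬ Sepa x T1 i j := by
      intro i j; simp [hCdef]
    -- global upper bound
    set B0 : ℝ := Finset.univ.sup' hne (x 0) with hB0def
    have hB0 : ∀ t k, x t k ≤ B0 := global_ub w x hw hupd hne
    -- limits per class
    have hlim : ∀ i : Fin n, ∃ ℓ, ∀ j ∈ C i, Tendsto (fun t => x t j) atTop (𝓝 ℓ) :=
      fun i => class_convergence w x hw hupd T1 hstab i (C i) (hCmem i) B0 hB0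
    choose ℓ hℓ using hlim
    -- eventually all non-separated pairs are within distance < 1
    have hEv : ∀ᶠ t in atTop, ∀ p : Fin n × Fin n,
        ¬ Sepa x T1 p.1 p.2 → |x t p.1 - x t p.2| < 1 := by
      rw [Filter.eventually_all]
      intro p
      by_cases hp : Sepa x T1 p.1 p.2
      · exact Filter.Eventually.of_forall (fun t h => absurd hp h)
      · have h1 : Tendsto (fun t => x t p.1) atTop (𝓝 (ℓ p.1)) :=
          hℓ p.1 p.1 ((hCmem p.1 p.1).2 (sepa_irrefl w x hw hupd T1 p.1))
        have h2 : Tendsto (fun t => x t p.2) atTop (𝓝 (ℓ p.1)) :=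
          hℓ p.1 p.2 ((hCmem p.1 p.2).2 hp)
        have h3 : Tendsto (fun t => |x t p.1 - x t p.2|) atTop (𝓝 0) := by
          have := (h1.sub h2).abs
          simpa using this
        filter_upwards [h3.eventually_lt_const one_pos] with t ht
        exact fun _ => ht
    obtain ⟨t2, ht2, ht2T1⟩ : ∃ t2, (∀ p : Fin n × Fin n,
        ¬ Sepa x T1 p.1 p.2 → |x t2 p.1 - x t2 p.2| < 1) ∧ T1 ≤ t2 := by
      obtain ⟨t2, h1, h2⟩ := (hEv.and (eventually_ge_atTop T1)).exists
      exact ⟨t2, h1, h2⟩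
    -- at time t2, each neighborhood equals the class
    have hN : ∀ i, Nbr x t2 i = C i := by
      intro i
      ext j
      rw [mem_Nbr, hCmem]
      constructor
      · intro h
        have := nbr_not_sep w x hw hupd (t := t2) (i := i) (j := j) (mem_Nbr x |>.2 h)
        exact fun hs => this ((hstab t2 ht2T1 i j).2 hs)
      · intro h
        exact ht2 (i, j) h
    -- classes are equal for non-separated pairs
    have hCeq : ∀ i j, ¬ Sepa x T1 i j → C i = C j := by
      intro i j hij
      ext k
      rw [hCmem, hCmem]
      constructor
      · intro hik
        exact not_sepa_trans w x hw hupd (fun h => hij (sepa_symm w x hw hupd h)) hik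
      · intro hjk
        exact not_sepa_trans w x hw hupd hij hjk
    -- at time t2+1, classes are constant
    have hstep : ∀ i j, ¬ Sepa x T1 i j → x (t2 + 1) i = x (t2 + 1) j := by
      intro i j hij
      rw [upd w x hw hupd, upd w x hw hupd, hN i, hN j, hCeq i j hij]
    -- t2+1 is a fixed point
    have hfix : ∀ i, x (t2 + 2) i = x (t2 + 1) i := by
      intro i
      have hconstN : ∀ k ∈ Nbr x (t2 + 1) i, x (t2 + 1) k = x (t2 + 1) i := by
        intro k hk
        have h1 : ¬ Sepa x (t2 + 1) i k := nbr_not_sep w x hw hupd hk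
        have h2 : ¬ Sepa x T1 i k := fun h => h1 ((hstab (t2 + 1) (by omega) i k).2 h)
        exact (hstep i k h2).symm
      have : x (t2 + 1 + 1) i =
          (∑ j ∈ Nbr x (t2 + 1) i, w j * x (t2 + 1) j) / (∑ j ∈ Nbr x (t2 + 1) i, w j) :=
        upd w x hw hupd (t2 + 1) i
      rw [show t2 + 2 = t2 + 1 + 1 from rfl, this]
      have he : ∑ j ∈ Nbr x (t2 + 1) i, w j * x (t2 + 1) j
          = ∑ j ∈ Nbr x (t2 + 1) i, w j * x (t2 + 1) i :=
        Finset.sum_congr rfl (fun j hj => by rw [hconstN j hj])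
      rw [he]
      exact wavg_const _ _ ⟨i, self_mem_Nbr x (t2 + 1) i⟩ (fun j _ => hw j) _
    -- the state is constant from t2+1 on
    have hconst : ∀ t, t2 + 1 ≤ t → ∀ i, x t i = x (t2 + 1) i := by
      intro t ht
      induction t, ht using Nat.le_induction with
      | base => exact fun i => rfl
      | succ t ht ih =>
        intro i
        rw [hupd t i]
        simp only [ih]
        rw [← hupd (t2 + 1) i]
        exact hfix i
    refine ⟨x (t2 + 1), t2 + 1, fun i t ht => hconst t ht i, fun i j => ?_⟩
    by_cases hij : Sepa x T1 i j
    · exact Or.inr (sepa_one_le w x hw hupd (sepa_mono w x hw hupd (by omega) hij))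
    · exact Or.inl (hstep i j hij)
  · -- order preservation
    exact fun i j h t => mono_from w x hw hupd (Nat.zero_le t) h
end

section
/- Let L > 0 and let (x_t) be a trajectory of the continuous-agent Krause model with x₀ ∈ X_L. Writing Δx_t = x_{t+1} − x_t, the series Σ_{t=0}^∞ ∫₀¹∫₀¹ χ_{x_t}(α,β) (Δx_t(α) + Δx_t(β))² dα dβ is finite. -/
open MeasureTheory

/-- Indicator of the connectivity: `χ_x(α,β) = 1` iff `|x α - x β| < 1`. -/
noncomputable def chiFn (x : ℝ → ℝ) (α β : ℝ) : ℝ :=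
  if |x α - x β| < 1 then 1 else 0

/-- `(x_t)` is a trajectory of the continuous-agent Krause model in `X_L`:
each `x_t` is measurable, maps `[0,1]` into `[0,L]`, and the update rule holds
on `[0,1]` (with the convention that the opinion stays unchanged when the
neighborhood has measure zero). -/
def IsKrauseTraj (L : ℝ) (x : ℕ → ℝ → ℝ) : Prop :=
  (∀ t, Measurable (x t)) ∧
  (∀ t, ∀ α ∈ Set.Icc (0 : ℝ) 1, x t α ∈ Set.Icc (0 : ℝ) L) ∧
  (∀ t, ∀ α ∈ Set.Icc (0 : ℝ) 1,
    x (t + 1) α =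
      if volume {β ∈ Set.Icc (0 : ℝ) 1 | |x t α - x t β| < 1} = 0 then x t α
      else (∫ β in {β ∈ Set.Icc (0 : ℝ) 1 | |x t α - x t β| < 1}, x t β) /
        (volume {β ∈ Set.Icc (0 : ℝ) 1 | |x t α - x t β| < 1}).toReal)

/-!
The truncated disagreement energy `E(u) = ∬ min ((u α - u β)², 1)` is a Lyapunov function of the
Krause dynamics: one step `u ↦ v` lowers it by at least the corresponding term of the series, so,
as `E ≥ 0`, the partial sums are bounded by `E(x₀)`. Pointwise, with `Δ = v - u`, when
`|u α - u β| < 1` one has the identity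
`(u α - u β)² - (v α - v β)² = (Δ α + Δ β)² - 2 Δ α (v α - u β) - 2 Δ β (v β - u α)`,
and otherwise `χ = 0` while the truncated square can only drop from `1`. The cross terms vanish
after integrating in `β`, because `v α` is the mean of `u` over the neighbourhood of `α`.
-/

lemma abs_sub_le_two_mul {a b C : ℝ} (ha : |a| ≤ C) (hb : |b| ≤ C) : |a - b| ≤ 2 * C := by
  linarith [abs_sub a b]

namespace Krause

variable {μ : Measure ℝ} {u v : ℝ → ℝ}

def nbhd (u : ℝ → ℝ) (α : ℝ) : Set ℝ := {β | |u α - u β| < 1}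

lemma measurableSet_nbhd (hu : Measurable u) (α : ℝ) : MeasurableSet (nbhd u α) :=
  measurableSet_lt (measurable_const.sub hu).abs measurable_const

lemma chiFn_mul_eq_indicator (u f : ℝ → ℝ) (α β : ℝ) :
    chiFn u α β * f β = (nbhd u α).indicator f β := by
  by_cases h : |u α - u β| < 1 <;> simp [chiFn, nbhd, h]

lemma chiFn_comm (u : ℝ → ℝ) (α β : ℝ) : chiFn u α β = chiFn u β α := by
  simp only [chiFn, abs_sub_comm]

lemma chiFn_nonneg (u : ℝ → ℝ) (α β : ℝ) : 0 ≤ chiFn u α β := by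
  unfold chiFn; split_ifs <;> norm_num

lemma abs_chiFn_mul_le (u : ℝ → ℝ) (α β w : ℝ) : |chiFn u α β * w| ≤ |w| := by
  unfold chiFn; split_ifs <;> simp

lemma measurable_chiFn (hu : Measurable u) : Measurable fun p : ℝ × ℝ => chiFn u p.1 p.2 :=
  Measurable.ite (measurableSet_lt ((hu.comp measurable_fst).sub (hu.comp measurable_snd)).abs
    measurable_const) measurable_const measurable_const

def IsKrauseStep (μ : Measure ℝ) (u v : ℝ → ℝ) : Prop :=
  ∀ᵐ α ∂μ, v α =
    if μ (nbhd u α) = 0 then u α else (∫ β in nbhd u α, u β ∂μ) / μ.real (nbhd u α)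

lemma IsKrauseStep.integral_chiFn_mul_sub_eq_zero [IsFiniteMeasure μ] (h : IsKrauseStep μ u v)
    (hu : Measurable u) (hui : Integrable u μ) :
    ∀ᵐ α ∂μ, ∫ β, chiFn u α β * (v α - u β) ∂μ = 0 := by
  filter_upwards [h] with α hα
  simp only [chiFn_mul_eq_indicator u (fun β => v α - u β) α]
  rw [integral_indicator (measurableSet_nbhd hu α),
    integral_sub (integrable_const _) hui.integrableOn, setIntegral_const, smul_eq_mul]
  by_cases h0 : μ (nbhd u α) = 0
  · simp [Measure.restrict_eq_zero.mpr h0, measureReal_def, h0]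
  · have hreal : μ.real (nbhd u α) ≠ 0 :=
      ENNReal.toReal_ne_zero.mpr ⟨h0, measure_ne_top μ _⟩
    rw [hα, if_neg h0, mul_div_cancel₀ _ hreal, sub_self]

noncomputable def energy (μ : Measure ℝ) (u : ℝ → ℝ) : ℝ :=
  ∫ p, min ((u p.1 - u p.2) ^ 2) 1 ∂μ.prod μ

lemma energy_nonneg : 0 ≤ energy μ u :=
  integral_nonneg fun _ => le_min (sq_nonneg _) zero_le_one

lemma chiFn_mul_sq_le (u v : ℝ → ℝ) (α β : ℝ) :
    chiFn u α β * (v α - u α + (v β - u β)) ^ 2 ≤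
      min ((u α - u β) ^ 2) 1 - min ((v α - v β) ^ 2) 1
        + 2 * (chiFn u α β * (v α - u α) * (v α - u β))
        + 2 * (chiFn u β α * (v β - u β) * (v β - u α)) := by
  rw [← chiFn_comm u α β]
  unfold chiFn
  split_ifs with h
  · have hsq : (u α - u β) ^ 2 < 1 := by nlinarith [sq_abs (u α - u β), abs_nonneg (u α - u β)]
    rw [min_eq_left hsq.le]
    nlinarith [min_le_left ((v α - v β) ^ 2) 1]
  · have hsq : 1 ≤ (u α - u β) ^ 2 := by
      nlinarith [sq_abs (u α - u β), not_lt.mp h]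
    rw [min_eq_right hsq]
    nlinarith [min_le_right ((v α - v β) ^ 2) 1]

lemma integral_chiFn_mul_mul_sub_eq_zero [IsFiniteMeasure μ] (hstep : IsKrauseStep μ u v)
    (hu : Measurable u) (hui : Integrable u μ)
    (hint : Integrable (fun p : ℝ × ℝ => chiFn u p.1 p.2 * (v p.1 - u p.1) * (v p.1 - u p.2))
      (μ.prod μ)) :
    ∫ p, chiFn u p.1 p.2 * (v p.1 - u p.1) * (v p.1 - u p.2) ∂μ.prod μ = 0 := by
  rw [integral_prod _ hint]
  refine integral_eq_zero_of_ae ?_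
  filter_upwards [hstep.integral_chiFn_mul_sub_eq_zero hu hui] with α hα
  simp only [mul_right_comm _ (v α - u α), integral_mul_const, hα, zero_mul, Pi.zero_apply]

lemma integrable_min_sq_sub_one [IsFiniteMeasure μ] (hu : Measurable u) :
    Integrable (fun p : ℝ × ℝ => min ((u p.1 - u p.2) ^ 2) 1) (μ.prod μ) :=
  Integrable.of_bound (by fun_prop) 1 <| ae_of_all _ fun p => by
    rw [Real.norm_eq_abs, abs_of_nonneg (le_min (sq_nonneg _) zero_le_one)]
    exact min_le_right _ _

lemma ae_prod_abs_le [IsFiniteMeasure μ] {C : ℝ} (hu_bd : ∀ᵐ α ∂μ, |u α| ≤ C)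
    (hv_bd : ∀ᵐ α ∂μ, |v α| ≤ C) :
    ∀ᵐ p ∂μ.prod μ, (|u p.1| ≤ C ∧ |v p.1| ≤ C) ∧ (|u p.2| ≤ C ∧ |v p.2| ≤ C) :=
  (Measure.quasiMeasurePreserving_fst.ae (hu_bd.and hv_bd)).and
    (Measure.quasiMeasurePreserving_snd.ae (hu_bd.and hv_bd))

lemma integrable_chiFn_mul_sq [IsFiniteMeasure μ] (hu : Measurable u) (hv : Measurable v)
    {C : ℝ} (hu_bd : ∀ᵐ α ∂μ, |u α| ≤ C) (hv_bd : ∀ᵐ α ∂μ, |v α| ≤ C) :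
    Integrable (fun p : ℝ × ℝ => chiFn u p.1 p.2 * (v p.1 - u p.1 + (v p.2 - u p.2)) ^ 2)
      (μ.prod μ) := by
  refine Integrable.of_bound ((measurable_chiFn hu).mul (by fun_prop)).aestronglyMeasurable
    ((2 * C + 2 * C) ^ 2) ?_
  filter_upwards [ae_prod_abs_le hu_bd hv_bd] with p ⟨⟨hu1, hv1⟩, hu2, hv2⟩
  rw [Real.norm_eq_abs]
  refine (abs_chiFn_mul_le _ _ _ _).trans ?_
  rw [abs_pow]
  exact pow_le_pow_left₀ (abs_nonneg _) ((abs_add_le _ _).trans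
    (add_le_add (abs_sub_le_two_mul hv1 hu1) (abs_sub_le_two_mul hv2 hu2))) 2

lemma integrable_chiFn_mul_mul_sub [IsFiniteMeasure μ] (hu : Measurable u) (hv : Measurable v)
    {C : ℝ} (hu_bd : ∀ᵐ α ∂μ, |u α| ≤ C) (hv_bd : ∀ᵐ α ∂μ, |v α| ≤ C) :
    Integrable (fun p : ℝ × ℝ => chiFn u p.1 p.2 * (v p.1 - u p.1) * (v p.1 - u p.2))
      (μ.prod μ) := by
  refine Integrable.of_bound ((measurable_chiFn hu).mul (by fun_prop) |>.mul
    (by fun_prop)).aestronglyMeasurable (2 * C * (2 * C)) ?_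
  filter_upwards [ae_prod_abs_le hu_bd hv_bd] with p ⟨⟨hu1, hv1⟩, hu2, _⟩
  rw [Real.norm_eq_abs, mul_assoc]
  refine (abs_chiFn_mul_le _ _ _ _).trans ?_
  rw [abs_mul]
  exact mul_le_mul (abs_sub_le_two_mul hv1 hu1) (abs_sub_le_two_mul hv1 hu2) (abs_nonneg _)
    ((abs_nonneg _).trans (abs_sub_le_two_mul hv1 hu1))

theorem integral_chiFn_mul_sq_le_energy_sub [IsFiniteMeasure μ] (hu : Measurable u)
    (hv : Measurable v) {C : ℝ} (hu_bd : ∀ᵐ α ∂μ, |u α| ≤ C) (hv_bd : ∀ᵐ α ∂μ, |v α| ≤ C)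
    (hstep : IsKrauseStep μ u v) :
    ∫ α, ∫ β, chiFn u α β * (v α - u α + (v β - u β)) ^ 2 ∂μ ∂μ ≤ energy μ u - energy μ v := by
  set G : ℝ × ℝ → ℝ := fun p => chiFn u p.1 p.2 * (v p.1 - u p.1) * (v p.1 - u p.2)
  have hF := integrable_chiFn_mul_sq hu hv hu_bd hv_bd
  have hG : Integrable G (μ.prod μ) := integrable_chiFn_mul_mul_sub hu hv hu_bd hv_bd
  have hGs : Integrable (fun p => G p.swap) (μ.prod μ) := hG.swap
  have hui : Integrable u μ :=
    Integrable.of_bound hu.aestronglyMeasurable C (by simpa only [Real.norm_eq_abs] using hu_bd)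
  have hG0 : ∫ p, G p ∂μ.prod μ = 0 := integral_chiFn_mul_mul_sub_eq_zero hstep hu hui hG
  have hGswap : ∫ p, G p.swap ∂μ.prod μ = 0 := (integral_prod_swap G).trans hG0
  have hQ : Integrable (fun p : ℝ × ℝ => min ((u p.1 - u p.2) ^ 2) 1
      - min ((v p.1 - v p.2) ^ 2) 1) (μ.prod μ) :=
    (integrable_min_sq_sub_one hu).sub (integrable_min_sq_sub_one hv)
  have hQG : Integrable (fun p : ℝ × ℝ => min ((u p.1 - u p.2) ^ 2) 1
      - min ((v p.1 - v p.2) ^ 2) 1 + 2 * G p) (μ.prod μ) := hQ.add (hG.const_mul 2)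
  rw [← integral_prod _ hF, energy, energy,
    ← integral_sub (integrable_min_sq_sub_one hu) (integrable_min_sq_sub_one hv)]
  calc _ ≤ ∫ p, (min ((u p.1 - u p.2) ^ 2) 1 - min ((v p.1 - v p.2) ^ 2) 1
          + 2 * G p + 2 * G p.swap) ∂μ.prod μ :=
        integral_mono hF (hQG.add (hGs.const_mul 2)) fun p => chiFn_mul_sq_le u v p.1 p.2
    _ = _ := by
      rw [integral_add hQG (hGs.const_mul 2), integral_add hQ (hG.const_mul 2),
        integral_const_mul, integral_const_mul, hG0, hGswap]
      ring

lemma _root_.IsKrauseTraj.isKrauseStep {L : ℝ} {x : ℕ → ℝ → ℝ} (hx : IsKrauseTraj L x)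
    (t : ℕ) :
    IsKrauseStep (volume.restrict (Set.Icc 0 1)) (x t) (x (t + 1)) := by
  refine ae_restrict_of_forall_mem measurableSet_Icc fun α hα => ?_
  have hN := measurableSet_nbhd (hx.1 t) α
  rw [hx.2.2 t α hα, measureReal_def, Measure.restrict_apply hN, Measure.restrict_restrict hN,
    Set.inter_comm]
  rfl

end Krause

lemma summable_of_le_sub_succ {f e : ℕ → ℝ} (hf : ∀ n, 0 ≤ f n) (he : ∀ n, 0 ≤ e n)
    (hfe : ∀ n, f n ≤ e n - e (n + 1)) : Summable f :=
  summable_of_sum_range_le hf fun n => calc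
    ∑ i ∈ Finset.range n, f i ≤ ∑ i ∈ Finset.range n, (e i - e (i + 1)) :=
      Finset.sum_le_sum fun i _ => hfe i
    _ = e 0 - e n := Finset.sum_range_sub' e n
    _ ≤ e 0 := sub_le_self _ (he n)

theorem krause_continuum_summable_general (L : ℝ) (x : ℕ → ℝ → ℝ)
    (htraj : IsKrauseTraj L x) :
    Summable (fun t : ℕ =>
      ∫ α in Set.Icc (0 : ℝ) 1, ∫ β in Set.Icc (0 : ℝ) 1,
        chiFn (x t) α β *
          ((x (t + 1) α - x t α) + (x (t + 1) β - x t β)) ^ 2) := by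
  have hbd (t : ℕ) : ∀ᵐ α ∂volume.restrict (Set.Icc (0 : ℝ) 1), |x t α| ≤ L :=
    ae_restrict_of_forall_mem measurableSet_Icc fun α hα =>
      (abs_of_nonneg (htraj.2.1 t α hα).1).trans_le (htraj.2.1 t α hα).2
  refine summable_of_le_sub_succ (fun t => ?_) (fun t => Krause.energy_nonneg) fun t =>
    Krause.integral_chiFn_mul_sq_le_energy_sub (htraj.1 t) (htraj.1 (t + 1)) (hbd t)
      (hbd (t + 1)) (htraj.isKrauseStep t)
  exact integral_nonneg fun α => integral_nonneg fun β =>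
    mul_nonneg (Krause.chiFn_nonneg _ _ _) (sq_nonneg _)

/-- Along any trajectory of the continuous-agent Krause model,
the series `Σ_t ∬ χ_{x_t}(α,β) (Δx_t(α) + Δx_t(β))² dα dβ` is finite. -/
theorem krause_continuum_summable (L : ℝ) (hL : 0 < L) (x : ℕ → ℝ → ℝ)
    (htraj : IsKrauseTraj L x) :
    Summable (fun t : ℕ =>
      ∫ α in Set.Icc (0 : ℝ) 1, ∫ β in Set.Icc (0 : ℝ) 1,
        chiFn (x t) α β *
          ((x (t + 1) α - x t α) + (x (t + 1) β - x t β)) ^ 2) :=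
  krause_continuum_summable_general L x htraj
end
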